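/- arXiv:1512.08701 — 6 statements merged into one kernel-verified Lean document; each statement's English description precedes it below -/
import Mathlib

section
/- Bárány–Doerr averaging (case d=1, stated for m parts): for every finite set A of real numbers in [0,1] and every positive integer m, there is a partition of A into m parts A_1,...,A_m such that for each i, the sum of elements of A_i lies within distance 3 of (1/m) times the sum of all elements of A. -/
/-!
Order `A` increasingly and cut it at the points where the running sum of its elements first
reaches the multiples `k * s / m` of the mean, `s = ∑ a ∈ A, a`. Each initial segment obtained this
way has sum at least its target and, since a single element is at most `1`, at most `1` above it.
Consecutive segments therefore differ by a block whose sum is within `1` of `s / m`.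
-/

open Finset

section PrefixSum

variable {α : Type*} [AddCommGroup α] [LinearOrder α]

def prefixSum (A : Finset α) (a : α) : α := ∑ b ∈ A with b < a, b

def lowerPart (A : Finset α) (t : α) : Finset α := {a ∈ A | prefixSum A a < t}

variable {A : Finset α}

lemma sum_filter_le_eq_add_prefixSum {a : α} (ha : a ∈ A) :
    ∑ b ∈ A with b ≤ a, b = a + prefixSum A a := by
  have hsingle : {b ∈ A | b ≤ a ∧ ¬b < a} = {a} := by
    ext b
    simp only [mem_filter, mem_singleton, not_lt]
    constructor
    · rintro ⟨-, hle, hge⟩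
      exact le_antisymm hle hge
    · rintro rfl
      exact ⟨ha, le_rfl, le_rfl⟩
  rw [← sum_filter_add_sum_filter_not (A.filter (· ≤ a)) (· < a), filter_filter, filter_filter,
    hsingle, sum_singleton, add_comm]
  congr 2
  ext b
  simp only [mem_filter]
  exact ⟨fun h => ⟨h.1, h.2.2⟩, fun h => ⟨h.1, h.2.le, h.2⟩⟩

lemma lowerPart_subset (t : α) : lowerPart A t ⊆ A := filter_subset _ _

lemma lowerPart_mono : Monotone (lowerPart A) := fun _ _ htt' =>
  monotone_filter_right A fun _ _ ha => ha.trans_le htt'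

variable [IsOrderedAddMonoid α]

lemma prefixSum_nonneg (hA : ∀ a ∈ A, 0 ≤ a) (a : α) : 0 ≤ prefixSum A a :=
  sum_nonneg fun b hb => hA b (mem_filter.mp hb).1

lemma prefixSum_mono (hA : ∀ a ∈ A, 0 ≤ a) : Monotone (prefixSum A) := fun _ _ haa' =>
  sum_le_sum_of_subset_of_nonneg (monotone_filter_right A fun _ _ hb => hb.trans_le haa')
    fun b hb _ => hA b (mem_filter.mp hb).1

lemma lowerPart_zero (hA : ∀ a ∈ A, 0 ≤ a) : lowerPart A 0 = ∅ :=
  filter_false_of_mem fun a _ => (prefixSum_nonneg hA a).not_gt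

lemma le_sum_lowerPart (hA : ∀ a ∈ A, 0 ≤ a) {t : α} (ht : t ≤ ∑ a ∈ A, a) :
    t ≤ ∑ a ∈ lowerPart A t, a := by
  by_cases hC : ∃ a ∈ A, t ≤ prefixSum A a
  · -- the set is cut off just below the first element whose prefix sum reaches `t`
    set C := {a ∈ A | t ≤ prefixSum A a}
    have hCne : C.Nonempty := by simpa [C, Finset.Nonempty] using hC
    obtain ⟨-, ha₀⟩ := mem_filter.mp (C.min'_mem hCne)
    have hcut : lowerPart A t = {b ∈ A | b < C.min' hCne} := by
      refine filter_congr fun b hb => ⟨fun hbt => ?_, fun hb₀ => ?_⟩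
      · by_contra! h
        exact (ha₀.trans (prefixSum_mono hA h)).not_gt hbt
      · by_contra! h
        exact (C.min'_le b (mem_filter.mpr ⟨hb, h⟩)).not_gt hb₀
    rw [hcut]
    exact ha₀
  · push Not at hC
    rwa [lowerPart, filter_true_of_mem hC]

lemma sum_lowerPart_le {c : α} (hA : ∀ a ∈ A, a ∈ Set.Icc 0 c) {t : α} (ht : 0 ≤ t)
    (hc : 0 ≤ c) : ∑ a ∈ lowerPart A t, a ≤ t + c := by
  rcases (lowerPart A t).eq_empty_or_nonempty with hL | hL
  · rw [hL, sum_empty]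
    exact add_nonneg ht hc
  · set a₁ := (lowerPart A t).max' hL
    obtain ⟨ha₁A, ha₁⟩ : a₁ ∈ A ∧ prefixSum A a₁ < t :=
      mem_filter.mp ((lowerPart A t).max'_mem hL)
    calc ∑ a ∈ lowerPart A t, a
        ≤ ∑ b ∈ A with b ≤ a₁, b :=
          sum_le_sum_of_subset_of_nonneg
            (fun b hb => mem_filter.mpr ⟨lowerPart_subset t hb, (lowerPart A t).le_max' b hb⟩)
            fun b hb _ => (hA b (mem_filter.mp hb).1).1
      _ = a₁ + prefixSum A a₁ := sum_filter_le_eq_add_prefixSum ha₁A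
      _ ≤ t + c := by rw [add_comm]; exact add_le_add ha₁.le (hA a₁ ha₁A).2

end PrefixSum

section Chain

variable {α : Type*} [DecidableEq α] {L : ℕ → Finset α}

lemma pairwise_disjoint_sdiff_succ (hL : Monotone L) :
    Pairwise fun i j => Disjoint (L (i + 1) \ L i) (L (j + 1) \ L j) := by
  intro i j hij
  wlog hlt : i < j generalizing i j
  · exact (this hij.symm (lt_of_le_of_ne (not_lt.mp hlt) hij.symm)).symm
  exact (disjoint_sdiff_self_right).mono_left (sdiff_subset.trans (hL hlt))

lemma biUnion_sdiff_succ (hL : Monotone L) (h0 : L 0 = ∅) (m : ℕ) :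
    (univ : Finset (Fin m)).biUnion (fun i => L (i + 1) \ L i) = L m := by
  ext a
  simp only [mem_biUnion, mem_univ, true_and, mem_sdiff]
  refine ⟨fun ⟨i, ha, _⟩ => hL i.2 ha, fun ha => ?_⟩
  -- `a` enters the chain at the first index `k` with `a ∈ L k`
  have hex : ∃ k, a ∈ L k := ⟨m, ha⟩
  have hk0 : Nat.find hex ≠ 0 := fun h => by simpa [h, h0] using Nat.find_spec hex
  refine ⟨⟨Nat.find hex - 1, by have := Nat.find_min' hex ha; omega⟩, ?_, ?_⟩
  · simpa [Nat.sub_add_cancel (Nat.pos_of_ne_zero hk0)] using Nat.find_spec hex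
  · exact Nat.find_min hex (Nat.sub_lt (Nat.pos_of_ne_zero hk0) one_pos)

end Chain

section CumulativePart

variable {K : Type*} [Field K] [LinearOrder K] {A : Finset K} {m : ℕ}

/-- The last cut is `A` itself rather than `lowerPart A (∑ a ∈ A, a)`, which misses the zeros
of `A` when the total sum is `0`. -/
def cumulativePart (A : Finset K) (m k : ℕ) : Finset K :=
  if k < m then lowerPart A (k * ((∑ a ∈ A, a) / m)) else A

lemma cumulativePart_self : cumulativePart A m m = A := by
  simp [cumulativePart]

variable [IsStrictOrderedRing K]

lemma cumulativePart_mono (hA : ∀ a ∈ A, 0 ≤ a) : Monotone (cumulativePart A m) := by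
  have hμ : 0 ≤ (∑ a ∈ A, a) / m := div_nonneg (sum_nonneg hA) m.cast_nonneg
  refine monotone_nat_of_le_succ fun k => ?_
  unfold cumulativePart
  split_ifs with hk hk'
  · exact lowerPart_mono (by gcongr; simp)
  · exact lowerPart_subset _
  · omega
  · exact le_rfl

lemma cumulativePart_zero (hA : ∀ a ∈ A, 0 ≤ a) (hm : 0 < m) : cumulativePart A m 0 = ∅ := by
  simp [cumulativePart, hm, lowerPart_zero hA]

lemma sum_cumulativePart_mem (hA : ∀ a ∈ A, a ∈ Set.Icc 0 1) (hm : 0 < m) {k : ℕ} (hk : k ≤ m) :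
    ∑ a ∈ cumulativePart A m k, a ∈
      Set.Icc (k * ((∑ a ∈ A, a) / m)) (k * ((∑ a ∈ A, a) / m) + 1) := by
  have hA0 : ∀ a ∈ A, 0 ≤ a := fun a ha => (hA a ha).1
  have hm' : (m : K) ≠ 0 := by positivity
  have hμ : 0 ≤ (∑ a ∈ A, a) / m := div_nonneg (sum_nonneg hA0) m.cast_nonneg
  unfold cumulativePart
  split_ifs with hkm
  · refine ⟨le_sum_lowerPart hA0 ?_, sum_lowerPart_le hA (by positivity) zero_le_one⟩
    calc (k : K) * ((∑ a ∈ A, a) / m) ≤ m * ((∑ a ∈ A, a) / m) := by gcongr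
      _ = ∑ a ∈ A, a := mul_div_cancel₀ _ hm'
  · obtain rfl : k = m := by omega
    rw [mul_div_cancel₀ _ hm']
    exact ⟨le_rfl, le_add_of_nonneg_right zero_le_one⟩

end CumulativePart

/-- Bárány–Doerr averaging, case `d = 1`: a finite set `A ⊆ [0,1]` can be partitioned
into `m` parts, each of whose sums is within `3` of `(1/m) ∑_{a ∈ A} a`. -/
theorem barany_doerr_dim_one (A : Finset ℝ) (hA : ∀ a ∈ A, a ∈ Set.Icc (0 : ℝ) 1)
    (m : ℕ) (hm : 0 < m) :
    ∃ P : Fin m → Finset ℝ,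
      (∀ i j, i ≠ j → Disjoint (P i) (P j)) ∧
      Finset.univ.biUnion P = A ∧
      ∀ i, |(∑ a ∈ P i, a) - (1 / m) * ∑ a ∈ A, a| ≤ 3 := by
  have hA0 : ∀ a ∈ A, 0 ≤ a := fun a ha => (hA a ha).1
  set L := cumulativePart A m
  have hL : Monotone L := cumulativePart_mono hA0
  refine ⟨fun i => L (i + 1) \ L i, fun i j hij => pairwise_disjoint_sdiff_succ hL
    (Fin.val_injective.ne hij), ?_, fun i => ?_⟩
  · exact (biUnion_sdiff_succ hL (cumulativePart_zero hA0 hm) m).trans cumulativePart_self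
  · obtain ⟨hlo, hhi⟩ := sum_cumulativePart_mem hA hm (Nat.succ_le_of_lt i.2)
    obtain ⟨hlo', hhi'⟩ := sum_cumulativePart_mem hA hm i.2.le
    push_cast at hlo hhi
    rw [sum_sdiff_eq_sub (hL i.val.le_succ), one_div_mul_eq_div, abs_le]
    constructor <;> linarith
end

section
/- Let a_1,...,a_t ∈ [0,1]^d and let m be a positive integer. Then there is a partition of {1,...,t} into sets I_1,...,I_m such that for each k and each coordinate j, |∑_{i∈I_k} (a_i)_j − (1/m)∑_{i=1}^t (a_i)_j| ≤ 3d. -/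
/-!
Iterative rounding, in the style of Beck and Fiala. Let `x ∈ [0,1]^ι` and let `F` be the set of
its fractional coordinates. Fewer than `|F|` coordinates `j` are heavy, i.e. have
`∑_{i ∈ F} a i j > d`, so some nonzero direction supported on `F` leaves all heavy sums unchanged;
moving along it until one more coordinate of `x` becomes `0` or `1` shrinks `F`. A coordinate
that is light at some stage is changed by at most its fractional mass `≤ d` by any later rounding,
so every `θ ∈ [0,1]` and `S` admit `A ⊆ S` with `∑_A a` within `d` of `θ ∑_S a` in every
coordinate.

Splitting `S` in the ratio `⌈m/2⌉ : ⌊m/2⌋` this way and recursing, an `m`-part partition has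
error at most `(3 - 3/m) d`: a half with `p` parts contributes `(3 - 3/p) d + d/p`, which is at
most `(3 - 3/m) d` because `3p ≤ 2m`.
-/

open Finset Function

section Rounding

variable {ι κ : Type*} [Fintype κ]

theorem card_filter_card_lt_sum_lt {a : ι → κ → ℝ} (ha : ∀ i j, a i j ∈ Set.Icc 0 1)
    {F : Finset ι} (hF : F.Nonempty) :
    #{j | (Fintype.card κ : ℝ) < ∑ i ∈ F, a i j} < #F := by
  set J : Finset κ := {j | (Fintype.card κ : ℝ) < ∑ i ∈ F, a i j}
  rcases J.eq_empty_or_nonempty with hJ | hJ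
  · simpa [hJ] using hF.card_pos
  have hlt : (#J : ℝ) * Fintype.card κ < ∑ j ∈ J, ∑ i ∈ F, a i j := by
    simpa using sum_lt_sum_of_nonempty hJ fun j hj => (mem_filter.1 hj).2
  have hle : ∑ j ∈ J, ∑ i ∈ F, a i j ≤ #F * Fintype.card κ := calc
    ∑ j ∈ J, ∑ i ∈ F, a i j ≤ ∑ j, ∑ i ∈ F, a i j :=
      sum_le_sum_of_subset_of_nonneg (subset_univ J) fun j _ _ =>
        sum_nonneg fun i _ => (ha i j).1
    _ = ∑ i ∈ F, ∑ j, a i j := sum_comm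
    _ ≤ ∑ i ∈ F, ∑ _j : κ, (1 : ℝ) := sum_le_sum fun i _ => sum_le_sum fun j _ => (ha i j).2
    _ = #F * Fintype.card κ := by simp
  exact_mod_cast lt_of_mul_lt_mul_right (hlt.trans_le hle) (Nat.cast_nonneg _)

variable [Fintype ι]

theorem exists_ne_zero_sum_mul_eq_zero {K : Type*} [Field K] (a : ι → κ → K) (F : Finset ι)
    (J : Finset κ) (h : #J < #F) :
    ∃ u : ι → K, (∀ i ∉ F, u i = 0) ∧ (∃ i, u i ≠ 0) ∧ ∀ j ∈ J, ∑ i, u i * a i j = 0 := by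
  classical
  let v : F → J → K := fun i j => a i j
  have hv : ¬LinearIndependent K v := fun hli => by
    have := hli.fintype_card_le_finrank
    simp only [Fintype.card_coe, Module.finrank_fintype_fun_eq_card] at this
    omega
  obtain ⟨g, hg, i₀, hi₀⟩ := Fintype.not_linearIndependent_iff.mp hv
  have hu : ∀ i : F, Subtype.val.extend g 0 i = g i := Subtype.val_injective.extend_apply _ _
  refine ⟨Subtype.val.extend g 0, fun i hi => ?_, ⟨i₀, by rwa [hu]⟩, fun j hj => ?_⟩
  · exact extend_apply' _ _ _ (by simpa using hi)
  · rw [← sum_subset (subset_univ F) (fun i _ hi => by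
      rw [extend_apply' _ _ _ (by simpa using hi), Pi.zero_apply, zero_mul]),
      ← sum_finset_coe]
    simpa [hu, v] using congr_fun hg ⟨j, hj⟩

theorem exists_add_mul_mem_Icc_eq_zero_or_one {x u : ι → ℝ} (hx : ∀ i, x i ∈ Set.Icc 0 1)
    (hu : ∃ i, u i ≠ 0) :
    ∃ ε : ℝ, (∀ i, x i + ε * u i ∈ Set.Icc 0 1) ∧
      ∃ i, u i ≠ 0 ∧ (x i + ε * u i = 0 ∨ x i + ε * u i = 1) := by
  classical
  set T : Finset ι := {i | u i ≠ 0}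
  have hT : T.Nonempty := by simpa [T, filter_nonempty_iff] using hu
  -- the time at which `x + ε • u` leaves `[0, 1]` through coordinate `i`
  let c : ι → ℝ := fun i => if 0 < u i then (1 - x i) / u i else x i / -u i
  have hc : ∀ i, 0 ≤ c i := fun i => by
    obtain ⟨h0, h1⟩ := hx i
    unfold c; split_ifs with h
    · exact div_nonneg (by linarith) h.le
    · exact div_nonneg h0 (by linarith)
  obtain ⟨i₀, hi₀, hε⟩ := exists_mem_eq_inf' hT c
  refine ⟨c i₀, fun i => ?_, i₀, (mem_filter.1 hi₀).2, ?_⟩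
  · obtain ⟨h0, h1⟩ := hx i
    have hεi : 0 ≤ c i₀ := hc i₀
    have hmin : u i ≠ 0 → c i₀ ≤ c i := fun h => hε ▸ inf'_le c (by simpa [T] using h)
    rcases lt_trichotomy (u i) 0 with hneg | hzero | hpos
    · have := hmin hneg.ne
      rw [show c i = x i / -u i from if_neg (not_lt.2 hneg.le), le_div_iff₀ (by linarith)]
        at this
      constructor <;> nlinarith
    · simp [hzero, h0, h1]
    · have := hmin hpos.ne'
      rw [show c i = (1 - x i) / u i from if_pos hpos, le_div_iff₀ hpos] at this
      constructor <;> nlinarith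
  · have hne := (mem_filter.1 hi₀).2
    unfold c; split_ifs with h
    · right; field_simp; ring
    · left; field_simp; ring

noncomputable def fractionalSupport (x : ι → ℝ) : Finset ι := {i | x i ≠ 0 ∧ x i ≠ 1}

@[simp]
theorem mem_fractionalSupport {x : ι → ℝ} {i : ι} :
    i ∈ fractionalSupport x ↔ x i ≠ 0 ∧ x i ≠ 1 := by
  simp [fractionalSupport]

theorem exists_rounding_step {a : ι → κ → ℝ} (ha : ∀ i j, a i j ∈ Set.Icc 0 1) {x : ι → ℝ}
    (hx : ∀ i, x i ∈ Set.Icc 0 1) (hF : (fractionalSupport x).Nonempty) :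
    ∃ x' : ι → ℝ, (∀ i, x' i ∈ Set.Icc 0 1) ∧ fractionalSupport x' ⊂ fractionalSupport x ∧
      (∀ i ∉ fractionalSupport x, x' i = x i) ∧
      ∀ j, (Fintype.card κ : ℝ) < ∑ i ∈ fractionalSupport x, a i j →
        ∑ i, x' i * a i j = ∑ i, x i * a i j := by
  set F := fractionalSupport x
  obtain ⟨u, huF, hu, hker⟩ :=
    exists_ne_zero_sum_mul_eq_zero a F _ (card_filter_card_lt_sum_lt ha hF)
  obtain ⟨ε, hε, i₀, hi₀, hbd⟩ := exists_add_mul_mem_Icc_eq_zero_or_one hx hu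
  have hoff : ∀ i ∉ F, x i + ε * u i = x i := fun i hi => by simp [huF i hi]
  refine ⟨fun i => x i + ε * u i, hε, ?_, hoff, fun j hj => ?_⟩
  · refine ssubset_iff_of_subset (fun i hi => ?_) |>.2 ⟨i₀, ?_, ?_⟩
    · by_contra hiF
      rw [mem_fractionalSupport, hoff i hiF] at hi
      exact hiF (mem_fractionalSupport.2 hi)
    · by_contra hiF
      exact hi₀ (huF i₀ hiF)
    · rw [mem_fractionalSupport, not_and_or, not_not, not_not]
      exact hbd
  · have := hker j (by simpa using hj)
    simp only [add_mul, sum_add_distrib, mul_assoc, ← mul_sum, this, mul_zero, add_zero]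

theorem abs_sum_sub_mul_le {s : Finset ι} {x y w : ι → ℝ} (hxy : ∀ i ∉ s, y i = x i)
    (h1 : ∀ i ∈ s, |y i - x i| ≤ 1) (hw : ∀ i ∈ s, 0 ≤ w i) :
    |∑ i, (y i - x i) * w i| ≤ ∑ i ∈ s, w i := by
  rw [← sum_subset (subset_univ s) fun i _ hi => by rw [hxy i hi, sub_self, zero_mul]]
  refine (abs_sum_le_sum_abs _ _).trans (sum_le_sum fun i hi => ?_)
  rw [abs_mul, abs_of_nonneg (hw i hi)]
  exact mul_le_of_le_one_left (hw i hi) (h1 i hi)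

theorem exists_rounding {a : ι → κ → ℝ} (ha : ∀ i j, a i j ∈ Set.Icc 0 1) (x : ι → ℝ)
    (hx : ∀ i, x i ∈ Set.Icc 0 1) :
    ∃ y : ι → ℝ, (∀ i, y i = 0 ∨ y i = 1) ∧ (∀ i ∉ fractionalSupport x, y i = x i) ∧
      ∀ j, |∑ i, (y i - x i) * a i j| ≤ Fintype.card κ := by
  induction hn : #(fractionalSupport x) using Nat.strong_induction_on generalizing x with
  | _ n ih =>
  rcases (fractionalSupport x).eq_empty_or_nonempty with hF | hF
  · refine ⟨x, fun i => ?_, fun _ _ => rfl, fun j => by simp⟩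
    have := eq_empty_iff_forall_notMem.1 hF i
    rwa [mem_fractionalSupport, not_and_or, not_not, not_not] at this
  obtain ⟨x', hx', hsub, hoff, hheavy⟩ := exists_rounding_step ha hx hF
  obtain ⟨y, hy, hyx', hbd⟩ := ih _ (hn ▸ card_lt_card hsub) x' hx' rfl
  have hyx : ∀ i ∉ fractionalSupport x, y i = x i := fun i hi =>
    (hyx' i fun h => hi (hsub.subset h)).trans (hoff i hi)
  refine ⟨y, hy, hyx, fun j => ?_⟩
  by_cases hj : (Fintype.card κ : ℝ) < ∑ i ∈ fractionalSupport x, a i j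
  · simpa only [sub_mul, sum_sub_distrib, hheavy j hj] using hbd j
  · refine (abs_sum_sub_mul_le hyx (fun i _ => ?_) fun i _ => (ha i j).1).trans (not_lt.1 hj)
    obtain ⟨h0, h1⟩ := hx i
    rcases hy i with h | h <;> rw [abs_le] <;> constructor <;> linarith

theorem exists_subset_norm_sum_sub_smul_le {a : ι → κ → ℝ} (ha : ∀ i j, a i j ∈ Set.Icc 0 1)
    (S : Finset ι) {θ : ℝ} (hθ : θ ∈ Set.Icc 0 1) :
    ∃ A ⊆ S, ‖∑ i ∈ A, a i - θ • ∑ i ∈ S, a i‖ ≤ Fintype.card κ := by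
  classical
  obtain ⟨y, hy01, hyx, hbd⟩ :=
    exists_rounding ha (fun i => if i ∈ S then θ else 0) fun i => by split_ifs <;> simp [hθ]
  refine ⟨({i | y i = 1} : Finset ι), fun i hi => ?_,
    (pi_norm_le_iff_of_nonneg (by positivity)).2 fun j => ?_⟩
  · by_contra hiS
    have := hyx i (by simp [hiS])
    simp_all
  · have hy : ∑ i ∈ ({i | y i = 1} : Finset ι), a i j = ∑ i, y i * a i j := by
      rw [sum_filter]
      exact sum_congr rfl fun i _ => by rcases hy01 i with h | h <;> simp [h]
    simpa [Finset.sum_apply, hy, sub_mul, sum_sub_distrib, ite_mul, sum_ite_mem, mul_sum]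
      using hbd j

end Rounding

section Partition

variable {ι E : Type*} [DecidableEq ι] [SeminormedAddCommGroup E] [NormedSpace ℝ E]

omit [DecidableEq ι] in
theorem pairwise_disjoint_on_append {p q : ℕ} {I₁ : Fin p → Finset ι} {I₂ : Fin q → Finset ι}
    (h₁ : Pairwise (Disjoint on I₁)) (h₂ : Pairwise (Disjoint on I₂))
    (h : ∀ k l, Disjoint (I₁ k) (I₂ l)) : Pairwise (Disjoint on (Fin.append I₁ I₂)) := by
  intro k l hkl
  induction k using Fin.addCases <;> induction l using Fin.addCases <;>
    simp only [onFun, Fin.append_left, Fin.append_right]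
  · exact h₁ fun h => hkl (congrArg _ h)
  · exact h _ _
  · exact (h _ _).symm
  · exact h₂ fun h => hkl (congrArg _ h)

theorem biUnion_append {p q : ℕ} (I₁ : Fin p → Finset ι) (I₂ : Fin q → Finset ι) :
    univ.biUnion (Fin.append I₁ I₂) = univ.biUnion I₁ ∪ univ.biUnion I₂ := by
  ext i
  simp only [mem_biUnion, mem_univ, true_and, mem_union]
  constructor
  · rintro ⟨k, hk⟩
    induction k using Fin.addCases <;> simp only [Fin.append_left, Fin.append_right] at hk
    exacts [.inl ⟨_, hk⟩, .inr ⟨_, hk⟩]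
  · rintro (⟨k, hk⟩ | ⟨k, hk⟩)
    exacts [⟨Fin.castAdd q k, by simpa⟩, ⟨Fin.natAdd p k, by simpa⟩]

omit [DecidableEq ι] in
theorem norm_sub_inv_smul_le_of_split {X Y Z : E} {n m D : ℝ} (hD : 0 ≤ D) (hn : 0 < n)
    (hnm : 3 * n ≤ 2 * m) (hX : ‖X - n⁻¹ • Y‖ ≤ (3 - 3 / n) * D)
    (hY : ‖Y - (n / m) • Z‖ ≤ D) :
    ‖X - m⁻¹ • Z‖ ≤ (3 - 3 / m) * D := by
  have hm : 0 < m := by linarith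
  have hdecomp : X - m⁻¹ • Z = (X - n⁻¹ • Y) + n⁻¹ • (Y - (n / m) • Z) := by
    rw [smul_sub, smul_smul, show n⁻¹ * (n / m) = m⁻¹ by field_simp]
    abel
  have hcoef : 3 / m ≤ 2 / n := by rw [div_le_div_iff₀ hm hn]; linarith
  calc ‖X - m⁻¹ • Z‖ ≤ ‖X - n⁻¹ • Y‖ + n⁻¹ * ‖Y - (n / m) • Z‖ := by
        rw [hdecomp]
        refine (norm_add_le _ _).trans_eq ?_
        rw [norm_smul, Real.norm_of_nonneg (inv_nonneg.2 hn.le)]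
    _ ≤ (3 - 3 / n) * D + n⁻¹ * D := by gcongr
    _ = (3 - 2 / n) * D := by ring
    _ ≤ (3 - 3 / m) * D := by gcongr

theorem exists_partition_norm_sub_le {a : ι → E} {D : ℝ} (hD : 0 ≤ D)
    (hsplit : ∀ S : Finset ι, ∀ θ ∈ Set.Icc (0 : ℝ) 1,
      ∃ A ⊆ S, ‖∑ i ∈ A, a i - θ • ∑ i ∈ S, a i‖ ≤ D)
    {m : ℕ} (hm : 0 < m) (S : Finset ι) :
    ∃ I : Fin m → Finset ι, Pairwise (Disjoint on I) ∧ univ.biUnion I = S ∧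
      ∀ k, ‖∑ i ∈ I k, a i - (m : ℝ)⁻¹ • ∑ i ∈ S, a i‖ ≤ (3 - 3 / m) * D := by
  induction m using Nat.strong_induction_on generalizing S with
  | _ m ih =>
  obtain rfl | hm2 : m = 1 ∨ 2 ≤ m := by omega
  · exact ⟨fun _ => S, Subsingleton.pairwise, by simp, fun _ => by simp⟩
  obtain ⟨p, q, hp, hq, hp3, hq3, rfl⟩ :
      ∃ p q, 0 < p ∧ 0 < q ∧ 3 * p ≤ 2 * (p + q) ∧ 3 * q ≤ 2 * (p + q) ∧ m = p + q :=
    ⟨(m + 1) / 2, m / 2, by omega, by omega, by omega, by omega, by omega⟩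
  have hpq : (0 : ℝ) < p + q := by positivity
  obtain ⟨A, hAS, hA⟩ := hsplit S (p / (p + q))
    ⟨by positivity, (div_le_one hpq).2 (by simp)⟩
  obtain ⟨I₁, hdisj₁, hcov₁, hbd₁⟩ := ih p (by omega) hp A
  obtain ⟨I₂, hdisj₂, hcov₂, hbd₂⟩ := ih q (by omega) hq (S \ A)
  refine ⟨Fin.append I₁ I₂, pairwise_disjoint_on_append hdisj₁ hdisj₂ fun k l => ?_, ?_,
    Fin.addCases (fun k => ?_) fun k => ?_⟩
  · exact disjoint_sdiff.mono (hcov₁ ▸ subset_biUnion_of_mem I₁ (mem_univ k))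
      (hcov₂ ▸ subset_biUnion_of_mem I₂ (mem_univ l))
  · rw [biUnion_append, hcov₁, hcov₂, union_sdiff_of_subset hAS]
  · rw [Fin.append_left]
    push_cast
    exact norm_sub_inv_smul_le_of_split hD (by exact_mod_cast hp) (by exact_mod_cast hp3)
      (hbd₁ k) hA
  · rw [Fin.append_right]
    push_cast
    refine norm_sub_inv_smul_le_of_split hD (by exact_mod_cast hq) (by exact_mod_cast hq3)
      (hbd₂ k) ?_
    have hcompl : ∑ i ∈ S \ A, a i - ((q : ℝ) / (p + q)) • ∑ i ∈ S, a i
        = -(∑ i ∈ A, a i - ((p : ℝ) / (p + q)) • ∑ i ∈ S, a i) := by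
      rw [sum_sdiff_eq_sub hAS, show (q : ℝ) / (p + q) = 1 - p / (p + q) by field_simp; ring]
      module
    rwa [hcompl, norm_neg]

end Partition

/-- Bárány–Doerr averaging lemma: vectors `a_1, …, a_t ∈ [0,1]^d` can be partitioned into
`m` parts such that in each part every coordinate sum is within `3d` of the average. -/
theorem barany_doerr (d t m : ℕ) (hm : 0 < m) (a : Fin t → Fin d → ℝ)
    (ha : ∀ i j, a i j ∈ Set.Icc (0 : ℝ) 1) :
    ∃ I : Fin m → Finset (Fin t),
      (∀ k l, k ≠ l → Disjoint (I k) (I l)) ∧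
      Finset.univ.biUnion I = Finset.univ ∧
      ∀ k, ∀ j, |(∑ i ∈ I k, a i j) - (1 / m) * ∑ i, a i j| ≤ 3 * d := by
  obtain ⟨I, hdisj, hcov, hbd⟩ := exists_partition_norm_sub_le (Nat.cast_nonneg d)
    (fun S θ hθ => by simpa using exists_subset_norm_sum_sub_smul_le ha S hθ) hm univ
  refine ⟨I, fun k l hkl => hdisj hkl, hcov, fun k j => ?_⟩
  calc |∑ i ∈ I k, a i j - 1 / m * ∑ i, a i j|
      ≤ ‖∑ i ∈ I k, a i - (m : ℝ)⁻¹ • ∑ i, a i‖ := by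
        simpa [Finset.sum_apply] using
          norm_le_pi_norm (∑ i ∈ I k, a i - (m : ℝ)⁻¹ • ∑ i, a i) j
    _ ≤ (3 - 3 / m) * d := hbd k
    _ ≤ 3 * d := by gcongr; exact sub_le_self _ (by positivity)
end

section
/- Every tree T on n vertices is (δ, 2/δ)-separable for every δ ∈ (0,1): one can remove at most δn vertices from T so that every component of the remaining forest has at most 2/δ vertices. -/
/-!
Fix `K = ⌊2/δ⌋` and delete vertices greedily. If some component of the remaining set `A` has more
than `K` vertices, it contains a *branch*: a vertex `w` together with a set `B ∋ w` of more than
`K` vertices, joined to the rest of `A` only through `w`, such that every component of `B \ {w}`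
has at most `K` vertices. (A branch of minimal size works: in a forest a larger component of
`B \ {w}` is joined to `w` by at most one edge, so it is itself a smaller branch.) Delete `w`,
set `B` aside and recurse on `A \ B`. Each deleted vertex is paid for by the more than `K`
vertices set aside with it, so at most `n / (K + 1) ≤ δ n` vertices are deleted.
-/

namespace SimpleGraph

variable {V : Type*} {G : SimpleGraph V} {A B : Set V} {u v w : V}

def ReachableIn (G : SimpleGraph V) (A : Set V) (u v : V) : Prop :=
  ∃ p : G.Walk u v, ∀ x ∈ p.support, x ∈ A

def componentIn (G : SimpleGraph V) (A : Set V) (v : V) : Set V :=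
  {u | G.ReachableIn A v u}

namespace ReachableIn

lemma refl (hu : u ∈ A) : G.ReachableIn A u u := ⟨.nil, by simpa using hu⟩

lemma of_adj (hu : u ∈ A) (hv : v ∈ A) (h : G.Adj u v) : G.ReachableIn A u v :=
  ⟨h.toWalk, by simp [hu, hv]⟩

lemma symm (h : G.ReachableIn A u v) : G.ReachableIn A v u := by
  obtain ⟨p, hp⟩ := h
  exact ⟨p.reverse, fun x hx => hp x (by simpa using hx)⟩

lemma trans {x : V} (h : G.ReachableIn A u v) (h' : G.ReachableIn A v x) :
    G.ReachableIn A u x := by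
  obtain ⟨p, hp⟩ := h
  obtain ⟨q, hq⟩ := h'
  exact ⟨p.append q, fun y hy => ((Walk.mem_support_append_iff p q).1 hy).elim (hp y) (hq y)⟩

lemma mono (hAB : A ⊆ B) (h : G.ReachableIn A u v) : G.ReachableIn B u v := by
  obtain ⟨p, hp⟩ := h
  exact ⟨p, fun x hx => hAB (hp x hx)⟩

lemma mem_right (h : G.ReachableIn A u v) : v ∈ A := by
  obtain ⟨p, hp⟩ := h
  exact hp v p.end_mem_support

end ReachableIn

lemma mem_componentIn_self (hv : v ∈ A) : v ∈ G.componentIn A v := .refl hv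

lemma componentIn_subset : G.componentIn A v ⊆ A := fun _ h => h.mem_right

lemma componentIn_mono (hAB : A ⊆ B) : G.componentIn A v ⊆ G.componentIn B v :=
  fun _ h => h.mono hAB

/-- Every vertex on a walk inside `A` from `v` lies in the component of `v`. -/
lemma componentIn_subset_componentIn_inter (h : G.componentIn A v ⊆ B) :
    G.componentIn A v ⊆ G.componentIn (A ∩ B) v := by
  classical
  rintro y ⟨p, hp⟩
  exact ⟨p, fun z hz => ⟨hp z hz,
    h ⟨p.takeUntil z hz, fun x hx => hp x (p.support_takeUntil_subset_support hz hx)⟩⟩⟩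

lemma IsAcyclic.eq_of_adj_of_reachableIn (hG : G.IsAcyclic) (hu : G.Adj w u) (hv : G.Adj w v)
    (h : G.ReachableIn A u v) (hw : w ∉ A) : u = v := by
  classical
  obtain ⟨p, hp⟩ := h
  have hwp : w ∉ p.toPath.val.support := fun h => hw (hp w (p.support_toPath_subset_support h))
  have hpath := (hG.subsingleton_path w v).elim (Path.singleton hv)
    ⟨.cons hu p.toPath.val, (Walk.cons_isPath_iff _ _).2 ⟨p.toPath.property, hwp⟩⟩
  have hlen : p.toPath.val.length = 0 := by
    simpa using congrArg (fun q : G.Path w v => q.val.length) hpath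
  exact Walk.eq_of_length_eq_zero hlen

/-- `B` is `w` together with some components of `A \ {w}`: no edge leaves `B \ {w}` inside `A`. -/
structure IsBranch (G : SimpleGraph V) (A : Set V) (w : V) (B : Set V) : Prop where
  mem : w ∈ B
  subset : B ⊆ A
  closed : ∀ b ∈ B \ {w}, ∀ x ∈ A, G.Adj b x → x ∈ B

lemma isBranch_componentIn (hv : v ∈ A) : G.IsBranch A v (G.componentIn A v) where
  mem := mem_componentIn_self hv
  subset := componentIn_subset
  closed _ hb _ hx hbx := hb.1.trans (.of_adj hb.1.mem_right hx hbx)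

namespace IsBranch

lemma mem_iff_of_reachableIn (hB : G.IsBranch A w B) (h : G.ReachableIn (A \ {w}) u v) :
    u ∈ B ↔ v ∈ B := by
  obtain ⟨p, hp⟩ := h
  induction p with
  | nil => rfl
  | cons hadj p ih =>
    have hu := hp _ (Walk.start_mem_support _)
    have hv := hp _ (List.mem_cons_of_mem _ p.start_mem_support)
    rw [← ih fun x hx => hp x (by simp [hx])]
    exact ⟨fun h => hB.closed _ ⟨h, hu.2⟩ _ hv.1 hadj,
      fun h => hB.closed _ ⟨h, hv.2⟩ _ hu.1 hadj.symm⟩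

lemma componentIn_subset_diff (hB : G.IsBranch A w B) (hv : v ∈ B) :
    G.componentIn (A \ {w}) v ⊆ B \ {w} :=
  fun _ hu => ⟨(hB.mem_iff_of_reachableIn hu).1 hv, (componentIn_subset hu).2⟩

lemma componentIn_subset_compl (hB : G.IsBranch A w B) (hv : v ∉ B) :
    G.componentIn (A \ {w}) v ⊆ Bᶜ :=
  fun _ hu => mt (hB.mem_iff_of_reachableIn hu).2 hv

/-- A component of `B \ {w}` is itself a branch, hanging at its unique neighbour of `w`
(or anywhere, if it has none). -/
lemma isBranch_componentIn (hG : G.IsAcyclic) (hB : G.IsBranch A w B) (hv : v ∈ B \ {w}) :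
    ∃ u, G.IsBranch A u (G.componentIn (A \ {w}) v) := by
  set C := G.componentIn (A \ {w}) v
  have hroot : ∃ u ∈ C, ∀ c ∈ C, G.Adj w c → c = u := by
    by_cases h : ∃ c ∈ C, G.Adj w c
    · obtain ⟨c, hc, hwc⟩ := h
      exact ⟨c, hc, fun d hd hwd =>
        hG.eq_of_adj_of_reachableIn hwd hwc (hd.symm.trans hc) (by simp)⟩
    · push Not at h
      exact ⟨v, mem_componentIn_self ⟨hB.subset hv.1, hv.2⟩, fun c hc hwc => absurd hwc (h c hc)⟩
  obtain ⟨u, hu, hroot⟩ := hroot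
  refine ⟨u, hu, componentIn_subset.trans Set.sdiff_subset, fun c hc x hx hcx => ?_⟩
  by_cases hxw : x = w
  · subst hxw
    exact absurd (hroot c hc.1 hcx.symm) hc.2
  · exact hc.1.trans (.of_adj (componentIn_subset hc.1) ⟨hx, hxw⟩ hcx)

lemma exists_small_components [Finite V] (hG : G.IsAcyclic) {K : ℕ} (hB : G.IsBranch A w B)
    (hK : K < B.ncard) :
    ∃ u C, G.IsBranch A u C ∧ K < C.ncard ∧
      ∀ c ∈ C \ {u}, (G.componentIn (A \ {u}) c).ncard ≤ K := by
  induction hn : B.ncard using Nat.strong_induction_on generalizing w B with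
  | _ n ih =>
  by_cases hsmall : ∀ v ∈ B \ {w}, (G.componentIn (A \ {w}) v).ncard ≤ K
  · exact ⟨w, B, hB, hn ▸ hK, hsmall⟩
  push Not at hsmall
  obtain ⟨v, hv, hbig⟩ := hsmall
  obtain ⟨u, hu⟩ := hB.isBranch_componentIn hG hv
  have hlt : (G.componentIn (A \ {w}) v).ncard < n := hn ▸ Set.ncard_lt_ncard
    ((hB.componentIn_subset_diff hv.1).trans_ssubset (Set.sdiff_singleton_ssubset.2 hB.mem))
  exact ih _ hlt hu hbig rfl

end IsBranch

theorem IsAcyclic.exists_separator [Finite V] (hG : G.IsAcyclic) (K : ℕ) (A : Set V) :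
    ∃ S ⊆ A, (K + 1) * S.ncard ≤ A.ncard ∧
      ∀ v ∈ A \ S, (G.componentIn (A \ S) v).ncard ≤ K := by
  induction hn : A.ncard using Nat.strong_induction_on generalizing A with
  | _ n ih =>
  by_cases hsmall : ∀ v ∈ A, (G.componentIn A v).ncard ≤ K
  · exact ⟨∅, Set.empty_subset _, by simp, by simpa using hsmall⟩
  push Not at hsmall
  obtain ⟨v, hv, hbig⟩ := hsmall
  obtain ⟨w, B, hB, hBK, hBsmall⟩ := (isBranch_componentIn hv).exists_small_components hG hbig
  have hBA : (A \ B).ncard + B.ncard = n := hn ▸ Set.ncard_sdiff_add_ncard_of_subset hB.subset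
  obtain ⟨S, hSA, hScard, hScomp⟩ := ih _ (by omega) (A \ B) rfl
  have hwS : w ∉ S := fun h => (hSA h).2 hB.mem
  have hdiff : A \ insert w S ⊆ A \ {w} := Set.sdiff_subset_sdiff_right (by simp)
  refine ⟨insert w S, Set.insert_subset (hB.subset hB.mem) (hSA.trans Set.sdiff_subset), ?_,
    fun x hx => ?_⟩
  · rw [Set.ncard_insert_of_notMem hwS, mul_add, mul_one]
    omega
  by_cases hxB : x ∈ B
  · calc (G.componentIn (A \ insert w S) x).ncard
        ≤ (G.componentIn (A \ {w}) x).ncard := Set.ncard_le_ncard (componentIn_mono hdiff)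
      _ ≤ K := hBsmall x ⟨hxB, fun h => hx.2 (h ▸ Set.mem_insert _ _)⟩
  · have hcompl : G.componentIn (A \ insert w S) x ⊆ Bᶜ :=
      (componentIn_mono hdiff).trans (hB.componentIn_subset_compl hxB)
    have hsub : (A \ insert w S) ∩ Bᶜ ⊆ (A \ B) \ S := fun y hy =>
      ⟨⟨hy.1.1, hy.2⟩, fun h => hy.1.2 (Set.mem_insert_of_mem _ h)⟩
    calc (G.componentIn (A \ insert w S) x).ncard
        ≤ (G.componentIn ((A \ B) \ S) x).ncard := Set.ncard_le_ncard
          ((componentIn_subset_componentIn_inter hcompl).trans (componentIn_mono hsub))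
      _ ≤ K := hScomp x (hsub ⟨hx, hxB⟩)

lemma ncard_supp_connectedComponentMk_induce_le [Finite V] (s : Set V) (v : s) :
    ((G.induce s).connectedComponentMk v).supp.ncard ≤ (G.componentIn s v).ncard := by
  rw [← Set.ncard_image_of_injective _ Subtype.val_injective]
  refine Set.ncard_le_ncard ?_
  rintro _ ⟨u, hu, rfl⟩
  obtain ⟨p⟩ := ConnectedComponent.exact hu
  refine ReachableIn.symm ⟨p.map (Embedding.induce s).toHom, fun x hx => ?_⟩
  obtain ⟨z, -, rfl⟩ := List.mem_map.1 (Walk.support_map _ p ▸ hx)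
  exact z.2

end SimpleGraph

/-- Every tree on `n` vertices is `(δ, 2/δ)`-separable for every `δ ∈ (0,1)`. -/
theorem tree_separable {V : Type} [Fintype V] (T : SimpleGraph V) (hT : T.IsTree)
    (δ : ℝ) (hδ : δ ∈ Set.Ioo (0 : ℝ) 1) :
    ∃ S : Set V, (S.ncard : ℝ) ≤ δ * Fintype.card V ∧
      ∀ comp : (T.induce Sᶜ).ConnectedComponent, (comp.supp.ncard : ℝ) ≤ 2 / δ := by
  set K := ⌊2 / δ⌋₊
  obtain ⟨S, -, hS, hcomp⟩ := hT.isAcyclic.exists_separator K Set.univ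
  rw [Set.ncard_univ, Nat.card_eq_fintype_card] at hS
  rw [← Set.compl_eq_univ_sdiff] at hcomp
  refine ⟨S, ?_, fun comp => ?_⟩
  · have hKδ : 1 ≤ δ * (K + 1) := by
      have := (div_lt_iff₀' hδ.1).1 (Nat.lt_floor_add_one (2 / δ))
      linarith
    have hS' : ((K + 1) * S.ncard : ℝ) ≤ Fintype.card V := by exact_mod_cast hS
    nlinarith [hδ.1]
  · induction comp using SimpleGraph.ConnectedComponent.ind with
    | h v =>
    calc (((T.induce Sᶜ).connectedComponentMk v).supp.ncard : ℝ) ≤ K := by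
          exact_mod_cast (SimpleGraph.ncard_supp_connectedComponentMk_induce_le _ v).trans (hcomp v v.2)
      _ ≤ 2 / δ := Nat.floor_le (div_pos two_pos hδ.1).le
end

section
/- Matching–extension correspondence: let G be a graph, H a graph, I a 2-independent set in H, and g an embedding of H − I into G such that the sets g(N_H(v)) for v ∈ I are pairwise disjoint. Define the bipartite graph B with parts {g(N_H(v)) : v ∈ I} and V(G) \ Im(g), where X is adjacent to x iff x is adjacent in G to every vertex of X. If |I| = |V(G) \ Im(g)|, then g extends to an embedding of H into G if and only if B contains a perfect matching. -/
/-!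
The vertices of `I` are pairwise non-adjacent, so every edge of `H` at a vertex `v ∈ I` goes to
`H − I`, where an extension must agree with `g`. Hence extending `g` amounts to choosing, for each
`v ∈ I`, a new vertex outside `Im g` adjacent to all of `g(N_H(v))`, injectively in `v`: exactly a
matching of `B` saturating `{g(N_H(v)) : v ∈ I}`.
-/

open Set

theorem Set.injective_piecewise_of_mapsTo_compl_image {α β : Type*} {s : Set α}
    [∀ a, Decidable (a ∈ s)] {f g : α → β} (hf : InjOn f s) (hg : InjOn g sᶜ)
    (hfg : MapsTo f s (g '' sᶜ)ᶜ) : Function.Injective (s.piecewise f g) :=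
  (injective_piecewise_iff s).2 ⟨hf, hg, fun _ hx y hy hxy => hfg hx ⟨y, hy, hxy.symm⟩⟩

namespace SimpleGraph

variable {α β : Type*} {H : SimpleGraph α} {G : SimpleGraph β} {I : Set α}

theorem IsIndepSet.notMem_of_adj (hI : H.IsIndepSet I) {u v : α} (hv : v ∈ I)
    (huv : H.Adj v u) : u ∉ I :=
  fun hu => hI hv hu (H.ne_of_adj huv) huv

theorem IsIndepSet.adj_piecewise [∀ a, Decidable (a ∈ I)] (hI : H.IsIndepSet I) {m g : α → β}
    (hg : ∀ u ∈ Iᶜ, ∀ v ∈ Iᶜ, H.Adj u v → G.Adj (g u) (g v))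
    (hm : ∀ v ∈ I, ∀ u ∈ H.neighborSet v, G.Adj (g u) (m v)) {u v : α} (huv : H.Adj u v) :
    G.Adj (I.piecewise m g u) (I.piecewise m g v) := by
  by_cases hu : u ∈ I
  · have hv : v ∉ I := hI.notMem_of_adj hu huv
    rw [piecewise_eq_of_mem _ _ _ hu, piecewise_eq_of_notMem _ _ _ hv]
    exact (hm u hu v huv).symm
  by_cases hv : v ∈ I
  · rw [piecewise_eq_of_notMem _ _ _ hu, piecewise_eq_of_mem _ _ _ hv]
    exact hm v hv u huv.symm
  · rw [piecewise_eq_of_notMem _ _ _ hu, piecewise_eq_of_notMem _ _ _ hv]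
    exact hg u hu v hv huv

end SimpleGraph

theorem matching_extension_correspondence_general {α β : Type}
    (H : SimpleGraph α) (G : SimpleGraph β) (I : Set α)
    (h2ind : ∀ u ∈ I, ∀ v ∈ I, u ≠ v →
      ¬ H.Adj u v ∧ Disjoint (H.neighborSet u) (H.neighborSet v))
    (g : α → β) (hginj : Set.InjOn g Iᶜ)
    (ghom : ∀ u ∈ Iᶜ, ∀ v ∈ Iᶜ, H.Adj u v → G.Adj (g u) (g v)) :
    (∃ h : α → β, Function.Injective h ∧
        (∀ u v, H.Adj u v → G.Adj (h u) (h v)) ∧ ∀ u ∈ Iᶜ, h u = g u) ↔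
    (∃ m : α → β, Set.InjOn m I ∧ (∀ v ∈ I, m v ∈ (g '' Iᶜ)ᶜ) ∧
        ∀ v ∈ I, ∀ u ∈ H.neighborSet v, G.Adj (g u) (m v)) := by
  have hI : H.IsIndepSet I := fun u hu v hv huv => (h2ind u hu v hv huv).1
  constructor
  · rintro ⟨h, hinj, hhom, hext⟩
    refine ⟨h, hinj.injOn, fun v hv => ?_, fun v hv u hu => ?_⟩
    · rw [mem_compl_iff, ← EqOn.image_eq hext, hinj.mem_set_image]
      exact not_not.2 hv
    · rw [← hext u (hI.notMem_of_adj hv hu)]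
      exact hhom u v hu.symm
  · rintro ⟨m, minj, mout, madj⟩
    classical
    exact ⟨I.piecewise m g, injective_piecewise_of_mapsTo_compl_image minj hginj mout,
      fun u v => hI.adj_piecewise ghom madj, fun u hu => piecewise_eq_of_notMem _ _ _ hu⟩

/-- Matching–extension correspondence: let `I` be a 2-independent set in `H` and let
`g` be an embedding (injective homomorphism) of `H − I` into `G` such that the sets
`g(N_H(v))`, `v ∈ I`, are pairwise disjoint and `|I| = |V(G) \ Im g|`. Then `g`
extends to an embedding of `H` into `G` if and only if the auxiliary bipartite graph
(with parts `{g(N_H(v)) : v ∈ I}` and `V(G) \ Im g`, and `X ∼ x` iff `x` is adjacent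
in `G` to every vertex of `X`) has a perfect matching. -/
theorem matching_extension_correspondence {α β : Type} [Fintype α] [Fintype β]
    (H : SimpleGraph α) (G : SimpleGraph β) (I : Set α)
    (h2ind : ∀ u ∈ I, ∀ v ∈ I, u ≠ v →
      ¬ H.Adj u v ∧ Disjoint (H.neighborSet u) (H.neighborSet v))
    (g : α → β) (hginj : Set.InjOn g Iᶜ)
    (ghom : ∀ u ∈ Iᶜ, ∀ v ∈ Iᶜ, H.Adj u v → G.Adj (g u) (g v))
    (hXdisj : I.Pairwise fun u v =>
      Disjoint (g '' H.neighborSet u) (g '' H.neighborSet v))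
    (hcard : I.ncard = ((g '' Iᶜ)ᶜ : Set β).ncard) :
    (∃ h : α → β, Function.Injective h ∧
        (∀ u v, H.Adj u v → G.Adj (h u) (h v)) ∧ ∀ u ∈ Iᶜ, h u = g u) ↔
    (∃ m : α → β, Set.InjOn m I ∧ (∀ v ∈ I, m v ∈ (g '' Iᶜ)ᶜ) ∧
        ∀ v ∈ I, ∀ u ∈ H.neighborSet v, G.Adj (g u) (m v)) :=
  matching_extension_correspondence_general H G I h2ind g hginj ghom
end

section
/- Local resilience of B(n,p) for perfect matchings: for every constant ε > 0 and p = p(n) with np/log n → ∞, with probability 1 − o(1/n), the random bipartite graph B(n,p) has the property that every subgraph obtained by deleting at most (1−ε)np/2 edges at each vertex still contains a perfect matching. -/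
open MeasureTheory

/-- The distribution of the random bipartite graph `B(n,p)`: each of the `n²`
potential cross edges is present independently with probability `p`. -/
noncomputable def bipartiteRandomGraph (n : ℕ) (p : ℝ) :
    Measure ((Fin n × Fin n) → Bool) :=
  Measure.pi fun _ =>
    ENNReal.ofReal p • Measure.dirac true +
      ENNReal.ofReal (1 - p) • Measure.dirac false

/-- `ω` (a bipartite graph on `[n] + [n]`, given by its indicator of cross edges) has
the property that every spanning subgraph obtained by deleting at most `r` edges at
each vertex still contains a perfect matching. -/
def matchingResilient (n : ℕ) (r : ℝ) (ω : Fin n × Fin n → Bool) : Prop :=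
  ∀ E' : Fin n × Fin n → Bool,
    (∀ e, E' e = true → ω e = true) →
    (∀ v : Fin n,
      ((Finset.univ.filter fun j => ω (v, j) = true ∧ E' (v, j) = false).card : ℝ) ≤ r ∧
      ((Finset.univ.filter fun i => ω (i, v) = true ∧ E' (i, v) = false).card : ℝ) ≤ r) →
    ∃ σ : Equiv.Perm (Fin n), ∀ i, E' (i, σ i) = true

/-!
Call `ω` good if every vertex has degree at least `(1 - ε/4) np` and, on each side, every set `X`
of at most `(n + 1)/2` vertices sends fewer than `|X| d` edges into any smaller set, where
`d = (1/2 + ε/4) np`. Deleting at most `(1 - ε) np / 2` edges at each vertex of a good graph leaves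
minimum degree `d`, and then Hall's condition holds: if `S` has neighbourhood `Y` with `|Y| < |S|`,
then either a subset of `S` of size `|Y| + 1`, or the set `Yᶜ` on the other side (whose
neighbourhood avoids `S`), is a small set all of whose at least `d` edges per vertex go into a
smaller set.

The Chernoff bounds `P(count ≥ x m), P(count ≤ x m) ≤ exp (-m klFun x)` for binomial counts show
that a degree fails with probability `exp (-Ω(np))` and a pair `(X, Y)` with probability
`exp (-Ω(|X| np))`. Since `np ≫ log n`, a union bound over vertices and over pairs gives failure
probability `O(n⁻²)`.
-/

open MeasureTheory ProbabilityTheory Finset Real InformationTheory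

lemma klFun_pos {x : ℝ} (hx : 0 ≤ x) (hx1 : x ≠ 1) : 0 < klFun x :=
  (klFun_nonneg hx).lt_of_ne fun h => hx1 ((klFun_eq_zero_iff hx).1 h.symm)

lemma exp_neg_mul_le_inv_pow_three {x a k : ℝ} (hx : 0 < x) (h : 3 * log x ≤ a * k) :
    exp (-a * k) ≤ (x ^ 3)⁻¹ := by
  rw [← exp_log (pow_pos hx 3), ← exp_neg, log_pow, exp_le_exp]
  push_cast
  linarith

lemma eventually_mul_log_le {f : ℕ → ℝ}
    (hf : Filter.Tendsto (fun n : ℕ => f n / log n) Filter.atTop Filter.atTop) (c : ℝ) {k : ℝ}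
    (hk : 0 < k) : ∀ᶠ n : ℕ in Filter.atTop, c * log n ≤ f n * k := by
  filter_upwards [hf.eventually_ge_atTop (c / k), Filter.eventually_gt_atTop 1] with n hn hn1
  have hlog : 0 < log n := log_pos (by exact_mod_cast hn1)
  rw [le_div_iff₀ hlog, div_mul_eq_mul_div, div_le_iff₀ hk] at hn
  linarith

lemma bipartiteRandomGraph_eq_pi (n : ℕ) (p : unitInterval) :
    bipartiteRandomGraph n p = Measure.pi fun _ => Ber(true, false, p) := by
  have h : ∀ x : unitInterval, ENNReal.ofReal x = unitInterval.toNNReal x := fun x => by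
    rw [ENNReal.ofReal, Real.toNNReal_of_nonneg x.2.1]; rfl
  simp only [bipartiteRandomGraph, bernoulliMeasure_def, h p, ← unitInterval.coe_symm_eq,
    h (unitInterval.symm p)]
  rfl

def countTrue {ι : Type*} (E : Finset ι) (ω : ι → Bool) : ℕ := #{e ∈ E | ω e = true}

lemma countTrue_mono {ι : Type*} {G ω : ι → Bool} (h : ∀ e, G e = true → ω e = true)
    (E : Finset ι) : countTrue E G ≤ countTrue E ω :=
  card_le_card (monotone_filter_right E fun e _ he => h e he)

section Chernoff

variable {ι : Type*} [Fintype ι] (p : unitInterval)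

lemma exp_mul_countTrue [DecidableEq ι] (E : Finset ι) (t : ℝ) (ω : ι → Bool) :
    exp (t * countTrue E ω) = ∏ e, if e ∈ E ∧ ω e = true then exp t else 1 := by
  rw [← prod_filter, prod_const, ← exp_nat_mul, mul_comm, countTrue, filter_and,
    filter_mem_eq_inter, univ_inter, inter_filter, inter_univ]

lemma mgf_countTrue (E : Finset ι) (t : ℝ) :
    mgf (fun ω => (countTrue E ω : ℝ)) (Measure.pi fun _ : ι => Ber(true, false, p)) t =
      (1 + p * (exp t - 1)) ^ #E := by
  classical
  simp only [mgf, exp_mul_countTrue]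
  rw [integral_fintype_prod_eq_prod (f := fun e b => if e ∈ E ∧ b = true then exp t else 1)]
  simp only [integral_bernoulliMeasure, and_true, Bool.false_eq_true, and_false, if_false,
    smul_eq_mul]
  rw [← prod_const, ← prod_ite_mem_eq E]
  refine prod_congr rfl fun e _ => ?_
  split_ifs <;> ring

variable {E : Finset ι} {x m : ℝ}

lemma exp_mul_mgf_countTrue_le (hx : 0 < x) (hm : (#E * (p : ℝ) - m) * (x - 1) ≤ 0) :
    exp (-log x * (x * m)) *
        mgf (fun ω => (countTrue E ω : ℝ)) (Measure.pi fun _ : ι => Ber(true, false, p)) (log x) ≤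
      exp (-m * klFun x) := by
  have hp0 : (0 : ℝ) ≤ p := p.2.1
  have hp1 : (p : ℝ) ≤ 1 := p.2.2
  rw [mgf_countTrue, exp_log hx]
  calc exp (-log x * (x * m)) * (1 + p * (x - 1)) ^ #E
      ≤ exp (-log x * (x * m)) * exp (p * (x - 1)) ^ #E := by
        gcongr
        · nlinarith
        · linarith [add_one_le_exp (p * (x - 1) : ℝ)]
    _ ≤ exp (-m * klFun x) := by
        rw [← exp_nat_mul, ← exp_add, klFun]
        gcongr
        nlinarith

theorem measureReal_countTrue_ge_le (hx : 1 ≤ x) (hm : #E * (p : ℝ) ≤ m) :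
    (Measure.pi fun _ : ι => Ber(true, false, p)).real {ω | x * m ≤ countTrue E ω} ≤
      exp (-m * klFun x) :=
  (measure_ge_le_exp_mul_mgf _ (log_nonneg hx) Integrable.of_finite).trans
    (exp_mul_mgf_countTrue_le p (by linarith) (by nlinarith))

theorem measureReal_countTrue_le_le (hx0 : 0 < x) (hx1 : x ≤ 1) (hm : m ≤ #E * (p : ℝ)) :
    (Measure.pi fun _ : ι => Ber(true, false, p)).real {ω | countTrue E ω ≤ x * m} ≤
      exp (-m * klFun x) :=
  (measure_le_le_exp_mul_mgf _ (log_nonpos hx0.le hx1) Integrable.of_finite).trans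
    (exp_mul_mgf_countTrue_le p hx0 (by nlinarith))

end Chernoff

lemma card_filter_eq_add_card_filter {α : Type*} [Fintype α] {f g : α → Bool}
    (h : ∀ a, g a = true → f a = true) :
    #{a | f a = true} = #{a | g a = true} + #{a | f a = true ∧ g a = false} := by
  rw [← card_filter_add_card_filter_not (s := {a | f a = true}) (fun a => g a = true),
    filter_filter, filter_filter]
  congr 2 <;> ext a <;> simp only [mem_filter, mem_univ, true_and, Bool.not_eq_true]
  exact ⟨And.right, fun hg => ⟨h a hg, hg⟩⟩

section Matching

variable {n : ℕ}

def leftDegree (ω : Fin n × Fin n → Bool) (v : Fin n) : ℕ := #{j | ω (v, j) = true}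

def SmallSetsSparse (ω : Fin n × Fin n → Bool) (d : ℝ) : Prop :=
  ∀ X Y : Finset (Fin n), 2 * #X ≤ n + 1 → #Y < #X → (countTrue (X ×ˢ Y) ω : ℝ) < #X * d

lemma countTrue_product (ω : Fin n × Fin n → Bool) (X Y : Finset (Fin n)) :
    countTrue (X ×ˢ Y) ω = ∑ i ∈ X, #{j ∈ Y | ω (i, j) = true} := by
  simp only [countTrue, card_filter, sum_product]

lemma leftDegree_eq_countTrue (ω : Fin n × Fin n → Bool) (v : Fin n) :
    leftDegree ω v = countTrue ({v} ×ˢ univ) ω := by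
  rw [countTrue_product, sum_singleton, leftDegree]

variable {G ω : Fin n × Fin n → Bool} {d : ℝ}

lemma card_mul_le_countTrue (hdeg : ∀ i, d ≤ leftDegree G i) {X Y : Finset (Fin n)}
    (hXY : ∀ i ∈ X, ∀ j, G (i, j) = true → j ∈ Y) :
    #X * d ≤ countTrue (X ×ˢ Y) G := by
  rw [countTrue_product, Nat.cast_sum, ← nsmul_eq_mul, ← sum_const]
  refine sum_le_sum fun i hi => (hdeg i).trans_eq ?_
  rw [leftDegree]
  congr 2
  ext j
  simpa using hXY i hi j

lemma card_le_card_of_forall_adj_mem (hω : SmallSetsSparse ω d)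
    (hGω : ∀ e, G e = true → ω e = true) (hdeg : ∀ i, d ≤ leftDegree G i)
    {X Y : Finset (Fin n)} (hX : 2 * #X ≤ n + 1) (hXY : ∀ i ∈ X, ∀ j, G (i, j) = true → j ∈ Y) :
    #X ≤ #Y := by
  by_contra! hYX
  have hG := card_mul_le_countTrue hdeg hXY
  have hGω' : (countTrue (X ×ˢ Y) G : ℝ) ≤ countTrue (X ×ˢ Y) ω := by
    exact_mod_cast countTrue_mono hGω _
  linarith [hω X Y hX hYX]

theorem exists_perm_of_smallSetsSparse (hω : SmallSetsSparse ω d)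
    (hω' : SmallSetsSparse (ω ∘ Prod.swap) d) (hGω : ∀ e, G e = true → ω e = true)
    (hdeg : ∀ i, d ≤ leftDegree G i) (hdeg' : ∀ j, d ≤ leftDegree (G ∘ Prod.swap) j) :
    ∃ σ : Equiv.Perm (Fin n), ∀ i, G (i, σ i) = true := by
  classical
  set t : Fin n → Finset (Fin n) := fun i => {j | G (i, j) = true}
  have hall : ∀ S : Finset (Fin n), #S ≤ #(S.biUnion t) := by
    intro S
    by_contra! hS
    set Y := S.biUnion t
    have hSY : ∀ i ∈ S, ∀ j, G (i, j) = true → j ∈ Y := fun i hi j hij =>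
      mem_biUnion.2 ⟨i, hi, by simpa [t] using hij⟩
    by_cases hsmall : 2 * (#Y + 1) ≤ n + 1
    · obtain ⟨S', hS'S, hS'⟩ := exists_subset_card_eq (hS : #Y + 1 ≤ #S)
      have := card_le_card_of_forall_adj_mem hω hGω hdeg (hS' ▸ hsmall)
        fun i hi => hSY i (hS'S hi)
      omega
    · -- the right-hand side violator `Yᶜ` is small, and its neighbours avoid `S`
      have hcompl := card_le_card_of_forall_adj_mem hω' (fun e => hGω e.swap) hdeg'
        (X := Yᶜ) (Y := Sᶜ) (by rw [card_compl, Fintype.card_fin]; omega)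
        fun j hj i hij => mem_compl.2 fun hi => mem_compl.1 hj (hSY i hi j hij)
      have hSn : #S ≤ n := card_le_univ S |>.trans_eq (Fintype.card_fin n)
      rw [card_compl, card_compl, Fintype.card_fin] at hcompl
      omega
  obtain ⟨f, hf, hft⟩ := (all_card_le_biUnion_card_iff_exists_injective t).1 hall
  exact ⟨Equiv.ofBijective f hf.bijective_of_finite, fun i => by simpa [t] using hft i⟩

theorem matchingResilient_of_smallSetsSparse {r : ℝ} (hdeg : ∀ v, r + d ≤ leftDegree ω v)
    (hdeg' : ∀ v, r + d ≤ leftDegree (ω ∘ Prod.swap) v) (hω : SmallSetsSparse ω d)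
    (hω' : SmallSetsSparse (ω ∘ Prod.swap) d) : matchingResilient n r ω := by
  intro G hGω hdel
  refine exists_perm_of_smallSetsSparse hω hω' hGω (fun i => ?_) (fun j => ?_)
  · have h := hdeg i
    simp only [leftDegree] at h ⊢
    rw [card_filter_eq_add_card_filter fun j => hGω (i, j), Nat.cast_add] at h
    linarith [(hdel i).1]
  · have h := hdeg' j
    simp only [leftDegree, Function.comp_apply, Prod.swap_prod_mk] at h ⊢
    rw [card_filter_eq_add_card_filter fun i => hGω (i, j), Nat.cast_add] at h
    linarith [(hdel j).2]

end Matching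

section RandomGraph

variable {n : ℕ} (p : unitInterval)

instance : IsProbabilityMeasure (bipartiteRandomGraph n p) := by
  rw [bipartiteRandomGraph_eq_pi]
  infer_instance

lemma measurePreserving_comp_swap :
    MeasurePreserving (fun ω : Fin n × Fin n → Bool => ω ∘ Prod.swap)
      (bipartiteRandomGraph n p) (bipartiteRandomGraph n p) := by
  rw [bipartiteRandomGraph_eq_pi]
  exact measurePreserving_arrowCongr' _ _ (Equiv.prodComm _ _) (MeasurableEquiv.refl Bool)
    fun _ => MeasurePreserving.id _

lemma measureReal_exists_leftDegree_lt_le {x : ℝ} (hx0 : 0 < x) (hx1 : x ≤ 1) :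
    (bipartiteRandomGraph n p).real {ω | ∃ v, leftDegree ω v < x * (n * p)} ≤
      n * exp (-(n * p) * klFun x) := by
  have hset : {ω : Fin n × Fin n → Bool | ∃ v, leftDegree ω v < x * (n * p)} ⊆
      ⋃ v ∈ univ, {ω | countTrue ({v} ×ˢ univ) ω ≤ x * (n * p)} := by
    rintro ω ⟨v, hv⟩
    rw [leftDegree_eq_countTrue] at hv
    exact Set.mem_biUnion (mem_univ v) hv.le
  calc _ ≤ ∑ v ∈ univ, (bipartiteRandomGraph n p).real
          {ω | countTrue ({v} ×ˢ univ) ω ≤ x * (n * p)} :=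
        (measureReal_mono hset (measure_ne_top _ _)).trans (measureReal_biUnion_finset_le _ _)
    _ ≤ ∑ _v : Fin n, exp (-(n * p) * klFun x) := by
        refine sum_le_sum fun v _ => ?_
        rw [bipartiteRandomGraph_eq_pi]
        exact measureReal_countTrue_le_le p hx0 hx1 (by simp)
    _ = n * exp (-(n * p) * klFun x) := by simp

lemma measureReal_countTrue_product_ge_le {δ : ℝ} (hδ : 0 ≤ δ) {X Y : Finset (Fin n)}
    (hX : 2 * #X ≤ n + 1) (hYX : #Y < #X) :
    (bipartiteRandomGraph n p).real {ω | #X * ((1 + δ) * (n * p / 2)) ≤ countTrue (X ×ˢ Y) ω} ≤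
      exp (-(#X * (n * p / 2)) * klFun (1 + δ)) := by
  have hY : (2 * #Y : ℝ) ≤ n := by exact_mod_cast (by omega : 2 * #Y ≤ n)
  have hp0 : (0 : ℝ) ≤ p := p.2.1
  rw [bipartiteRandomGraph_eq_pi]
  convert measureReal_countTrue_ge_le p (E := X ×ˢ Y) (x := 1 + δ) (m := #X * (n * p / 2))
    (by linarith) ?_ using 4
  · rw [mul_left_comm]
  · rw [card_product, Nat.cast_mul]
    nlinarith [mul_le_mul_of_nonneg_right hY (mul_nonneg (Nat.cast_nonneg #X) hp0)]

lemma sum_pow_card_mul_pow_card {α : Type*} [Fintype α] (b : ℝ) :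
    ∑ q : Finset α × Finset α, b ^ #q.1 * b ^ #q.2 = (b + 1) ^ (2 * Fintype.card α) := by
  have h := Fintype.sum_pow_mul_eq_add_pow α b 1
  simp only [one_pow, mul_one] at h
  simp only [Fintype.sum_prod_type]
  rw [← Fintype.sum_mul_sum, h, two_mul, pow_add]

lemma measureReal_not_smallSetsSparse_le {δ : ℝ} (hδ : 0 ≤ δ) :
    (bipartiteRandomGraph n p).real {ω | ¬ SmallSetsSparse ω ((1 + δ) * (n * p / 2))} ≤
      exp (-(n * p / 4) * klFun (1 + δ)) * (exp (-(n * p / 4) * klFun (1 + δ)) + 1) ^ (2 * n) := by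
  set b := exp (-(n * p / 4) * klFun (1 + δ))
  set P := ({q | 2 * #q.1 ≤ n + 1 ∧ #q.2 < #q.1} : Finset (Finset (Fin n) × Finset (Fin n)))
  have hset : {ω : Fin n × Fin n → Bool | ¬ SmallSetsSparse ω ((1 + δ) * (n * p / 2))} ⊆
      ⋃ q ∈ P, {ω | #q.1 * ((1 + δ) * (n * p / 2)) ≤ countTrue (q.1 ×ˢ q.2) ω} := by
    intro ω hω
    simp only [SmallSetsSparse, not_forall, not_lt] at hω
    obtain ⟨X, Y, hX, hYX, h⟩ := hω
    exact Set.mem_biUnion (x := (X, Y)) (by simp [P, hX, hYX]) h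
  have hrate : (0 : ℝ) ≤ n * p * klFun (1 + δ) :=
    mul_nonneg (mul_nonneg n.cast_nonneg p.2.1) (klFun_nonneg (by linarith))
  calc _ ≤ ∑ q ∈ P, (bipartiteRandomGraph n p).real
          {ω | #q.1 * ((1 + δ) * (n * p / 2)) ≤ countTrue (q.1 ×ˢ q.2) ω} :=
        (measureReal_mono hset (measure_ne_top _ _)).trans (measureReal_biUnion_finset_le _ _)
    _ ≤ ∑ q ∈ P, b ^ #q.1 * b ^ #q.2 * b := by
        refine sum_le_sum fun q hq => ?_
        obtain ⟨hX, hYX⟩ := (mem_filter.1 hq).2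
        refine (measureReal_countTrue_product_ge_le p hδ hX hYX).trans ?_
        -- `#X + #Y + 1 ≤ 2 #X` turns the rate `#X · np/2` into one that factorises over `(X, Y)`
        have hXY : (#q.1 + #q.2 + 1 : ℝ) ≤ 2 * #q.1 := by exact_mod_cast (by omega : _)
        rw [← exp_nat_mul, ← exp_nat_mul, ← exp_add, ← exp_add, exp_le_exp]
        nlinarith
    _ ≤ ∑ q : Finset (Fin n) × Finset (Fin n), b ^ #q.1 * b ^ #q.2 * b :=
        sum_le_sum_of_subset_of_nonneg (subset_univ P) fun _ _ _ => by positivity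
    _ = b * (b + 1) ^ (2 * n) := by
        rw [← sum_mul, sum_pow_card_mul_pow_card, Fintype.card_fin, mul_comm]

theorem measureReal_not_matchingResilient_le {ε r : ℝ} (hε0 : 0 < ε) (hε1 : ε ≤ 1)
    (hr : r ≤ (1 - ε) * n * p / 2) :
    (bipartiteRandomGraph n p).real {ω | ¬ matchingResilient n r ω} ≤
      2 * (n * exp (-(n * p) * klFun (1 - ε / 4)) + exp (-(n * p / 4) * klFun (1 + ε / 2)) *
        (exp (-(n * p / 4) * klFun (1 + ε / 2)) + 1) ^ (2 * n)) := by
  set F : Set (Fin n × Fin n → Bool) := {ω | ∃ v, leftDegree ω v < (1 - ε / 4) * (n * p)} ∪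
    {ω | ¬ SmallSetsSparse ω ((1 + ε / 2) * (n * p / 2))}
  have hsub : {ω | ¬ matchingResilient n r ω} ⊆ F ∪ (fun ω => ω ∘ Prod.swap) ⁻¹' F := by
    intro ω hω
    contrapose! hω
    simp only [F, Set.mem_union, Set.mem_preimage, Set.mem_ofPred_eq, not_or, not_exists, not_lt,
      not_not] at hω
    obtain ⟨⟨hdeg, hsparse⟩, hdeg', hsparse'⟩ := hω
    have hrd : r + (1 + ε / 2) * (n * p / 2) ≤ (1 - ε / 4) * (n * p) := by linarith
    exact not_not.2 <| matchingResilient_of_smallSetsSparse (fun v => hrd.trans (hdeg v))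
      (fun v => hrd.trans (hdeg' v)) hsparse hsparse'
  calc _ ≤ (bipartiteRandomGraph n p).real F +
          (bipartiteRandomGraph n p).real ((fun ω => ω ∘ Prod.swap) ⁻¹' F) :=
        (measureReal_mono hsub).trans (measureReal_union_le _ _)
    _ = 2 * (bipartiteRandomGraph n p).real F := by
        rw [(measurePreserving_comp_swap p).measureReal_preimage
          (Set.toFinite F).measurableSet.nullMeasurableSet]
        ring
    _ ≤ _ := by
        gcongr
        exact (measureReal_union_le _ _).trans
          (add_le_add (measureReal_exists_leftDegree_lt_le p (by linarith) (by linarith))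
            (measureReal_not_smallSetsSparse_le p (by linarith)))

theorem measureReal_not_matchingResilient_le_of_log_le {ε r : ℝ} (hn : 2 ≤ n) (hε0 : 0 < ε)
    (hε1 : ε ≤ 1) (hr : r ≤ (1 - ε) * n * p / 2)
    (h₁ : 3 * log n ≤ n * p * klFun (1 - ε / 4))
    (h₂ : 3 * log n ≤ n * p / 4 * klFun (1 + ε / 2)) :
    (bipartiteRandomGraph n p).real {ω | ¬ matchingResilient n r ω} ≤ 8 / n ^ 2 := by
  have hn0 : (2 : ℝ) ≤ n := by exact_mod_cast hn
  have ha := exp_neg_mul_le_inv_pow_three (by positivity) h₁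
  have hb := exp_neg_mul_le_inv_pow_three (by positivity) h₂
  set b := exp (-(n * p / 4) * klFun (1 + ε / 2))
  have hb1 : (b + 1) ^ (2 * n) ≤ 3 :=
    calc (b + 1) ^ (2 * n) ≤ exp b ^ (2 * n) :=
          pow_le_pow_left₀ (by positivity) (by linarith [add_one_le_exp b]) _
      _ = exp (2 * n * b) := by rw [← exp_nat_mul]; push_cast; ring_nf
      _ ≤ exp 1 := by
          refine exp_le_exp.2 ?_
          calc 2 * n * b ≤ 2 * n * ((n : ℝ) ^ 3)⁻¹ := by gcongr
            _ = 2 / n ^ 2 := by field_simp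
            _ ≤ 1 := by rw [div_le_one (by positivity)]; nlinarith
      _ ≤ 3 := by linarith [exp_one_lt_d9]
  calc _ ≤ _ := measureReal_not_matchingResilient_le p hε0 hε1 hr
    _ ≤ 2 * (n * ((n : ℝ) ^ 3)⁻¹ + ((n : ℝ) ^ 3)⁻¹ * 3) := by gcongr
    _ ≤ 8 / n ^ 2 := by
        field_simp
        nlinarith

end RandomGraph

/-- Local resilience of `B(n,p)` with respect to perfect matchings: for `ε > 0` and
`np/log n → ∞`, with probability `1 − o(1/n)` every subgraph of `B(n,p)` obtained by
deleting at most `(1−ε)np/2` edges at each vertex contains a perfect matching. -/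
theorem bipartite_matching_resilience (ε : ℝ) (hε : 0 < ε) (p : ℕ → ℝ)
    (hp01 : ∀ n, 0 ≤ p n ∧ p n ≤ 1)
    (hp : Filter.Tendsto (fun (n : ℕ) => (n : ℝ) * p n / Real.log n)
      Filter.atTop Filter.atTop) :
    Filter.Tendsto
      (fun (n : ℕ) => (n : ℝ) *
        (bipartiteRandomGraph n (p n)
          {ω | ¬ matchingResilient n ((1 - ε) * n * p n / 2) ω}).toReal)
      Filter.atTop (nhds 0) := by
  set ε' := min ε 1
  have hε' : 0 < ε' := lt_min hε one_pos
  have hε'1 : ε' ≤ 1 := min_le_right _ _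
  have hk₁ : 0 < klFun (1 - ε' / 4) := klFun_pos (by linarith) (by linarith)
  have hk₂ : 0 < klFun (1 + ε' / 2) / 4 := by
    have := klFun_pos (x := 1 + ε' / 2) (by linarith) (by linarith)
    positivity
  refine squeeze_zero' (Filter.Eventually.of_forall fun n => by positivity) ?_
    (tendsto_const_div_atTop_nhds_zero_nat 8)
  filter_upwards [eventually_mul_log_le hp 3 hk₁, eventually_mul_log_le hp 3 hk₂,
    Filter.eventually_ge_atTop 2] with n h₁ h₂ hn
  have hr : (1 - ε) * n * p n / 2 ≤ (1 - ε') * n * p n / 2 := by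
    have := (hp01 n).1
    gcongr
    exact min_le_left ε 1
  calc _ ≤ (n : ℝ) * (8 / n ^ 2) := by
        gcongr
        exact measureReal_not_matchingResilient_le_of_log_le ⟨p n, hp01 n⟩ hn hε' hε'1 hr h₁
          (by simp only; linarith)
    _ = 8 / n := by field_simp
end

section
/- Bin-packing lemma for the averaging partition: let A be a finite multiset of positive integers each at most K with total sum n, and let b be a positive integer. Then A can be partitioned into b parts such that each part has sum within 12K of n/b. -/
/-!
Put the elements into the parts greedily, each one into a currently lightest part. Any two
part sums then stay within `K` of each other: the new element is at most `K` and lands in a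
part no heavier than any other. Part sums that are pairwise within `K` are each within `K`
of their average `n / b`.
-/

open Finset

namespace Multiset

variable {ι M : Type*} [Fintype ι] [DecidableEq ι] [Nonempty ι]
  [AddCommMonoid M] [LinearOrder M] [IsOrderedAddMonoid M] [CanonicallyOrderedAdd M]

theorem exists_partition_sum_le_sum_add (K : M) (A : Multiset M) (hA : ∀ x ∈ A, x ≤ K) :
    ∃ P : ι → Multiset M, ∑ i, P i = A ∧ ∀ i j, (P i).sum ≤ (P j).sum + K := by
  induction A using Multiset.induction_on with
  | empty => exact ⟨0, by simp, fun _ _ => by simp⟩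
  | cons x A ih =>
    obtain ⟨P, hPA, hP⟩ := ih fun y hy => hA y (mem_cons_of_mem hy)
    obtain ⟨j, hj⟩ := Finite.exists_min fun i => (P i).sum
    let Q : ι → Multiset M := P + Pi.single j {x}
    refine ⟨Q, ?_, fun i k => ?_⟩
    · rw [show ∑ i, Q i = ∑ i, P i + ∑ i, Pi.single j {x} i from sum_add_distrib, hPA,
        Finset.sum_pi_single', if_pos (mem_univ j), add_comm, singleton_add]
    · have hk : (P k).sum + K ≤ (Q k).sum + K := by
        gcongr
        simp only [Q, Pi.add_apply, sum_add, le_self_add]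
      obtain rfl | hij := eq_or_ne i j
      · simpa [Q] using (add_le_add (hj k) (hA x (mem_cons_self x A))).trans hk
      · simpa [Q, hij] using (hP i k).trans hk

end Multiset

theorem abs_sub_average_le_of_forall_le_add {ι 𝕜 : Type*} [Fintype ι] [Nonempty ι] [Field 𝕜]
    [LinearOrder 𝕜] [IsStrictOrderedRing 𝕜] {s : ι → 𝕜} {K : 𝕜} (hs : ∀ i j, s i ≤ s j + K)
    (i : ι) : |s i - (∑ j, s j) / Fintype.card ι| ≤ K := by
  have hcard : (0 : 𝕜) < Fintype.card ι := by exact_mod_cast Fintype.card_pos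
  rw [sub_div' hcard.ne', abs_div, abs_of_pos hcard, div_le_iff₀ hcard, abs_sub_le_iff]
  have hle : ∑ j, (s i - s j) ≤ ∑ _j : ι, K := sum_le_sum fun j _ => by linarith [hs i j]
  have hge : ∑ j, (s j - s i) ≤ ∑ _j : ι, K := sum_le_sum fun j _ => by linarith [hs j i]
  simp only [sum_sub_distrib, sum_const, card_univ, nsmul_eq_mul] at hle hge
  constructor <;> linarith

/-- Bin-packing via the averaging partition: a finite multiset of positive integers,
each at most `K`, with total sum `n`, can be partitioned into `b` parts so that each
part's sum is within `12K` of `n/b`. -/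
theorem averaging_bin_packing (K : ℕ) (A : Multiset ℕ)
    (hA : ∀ x ∈ A, 0 < x ∧ x ≤ K) (b : ℕ) (hb : 0 < b) :
    ∃ P : Fin b → Multiset ℕ, (∑ i, P i) = A ∧
      ∀ i, |((P i).sum : ℝ) - (A.sum : ℝ) / b| ≤ 12 * K := by
  have : Nonempty (Fin b) := ⟨⟨0, hb⟩⟩
  obtain ⟨P, hPA, hP⟩ :=
    Multiset.exists_partition_sum_le_sum_add (ι := Fin b) K A fun x hx => (hA x hx).2
  refine ⟨P, hPA, fun i => ?_⟩
  have hsum : (A.sum : ℝ) = ∑ j, ((P j).sum : ℝ) := by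
    rw [← hPA, Multiset.sum_sum, Nat.cast_sum]
  have hbalanced : |((P i).sum : ℝ) - (A.sum : ℝ) / b| ≤ K := by
    simpa [hsum] using abs_sub_average_le_of_forall_le_add
      (s := fun j => ((P j).sum : ℝ)) (K := K) (fun j k => by exact_mod_cast hP j k) i
  linarith [(Nat.cast_nonneg K : (0 : ℝ) ≤ K)]
end
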